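/- For every fragment there is a csc path with the same endpoint condition whose circular components each have length less than π: let (x,X),(y,Y) ∈ ℝ² × ℝ² with ‖X‖ = ‖Y‖ = 1, and suppose γ : [0,s] → ℝ² is a bounded curvature path with γ(0) = x, γ'(0) = X, γ(s) = y, γ'(s) = Y and s < 1. Then there exists a csc path β from (x,X) to (y,Y), i.e. a bounded curvature path β with the same endpoint condition which is a concatenation of an arc of a unit-radius circle, a line segment, and an arc of a unit-radius circle (pieces possibly of zero length), with each circular arc of length less than π. -/

import Mathlib

open Real Set

noncomputable section

/-- Points of the Euclidean plane. -/
abbrev Pt : Type := EuclideanSpace ℝ (Fin 2)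

/-- `BCPath γ γ' s` : `γ : [0,s] → ℝ²` is a bounded curvature path (curvature bound 1):
continuously differentiable with derivative `γ'`, unit speed, and `γ'` 1-Lipschitz on `[0,s]`. -/
structure BCPath (γ γ' : ℝ → Pt) (s : ℝ) : Prop where
  nonneg : 0 ≤ s
  hasDeriv : ∀ t ∈ Icc (0:ℝ) s, HasDerivWithinAt γ (γ' t) (Icc (0:ℝ) s) t
  contDeriv : ContinuousOn γ' (Icc (0:ℝ) s)
  unitSpeed : ∀ t ∈ Icc (0:ℝ) s, ‖γ' t‖ = 1
  lipDeriv : LipschitzOnWith 1 γ' (Icc (0:ℝ) s)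

/-- Endpoint condition: the path starts at `x` tangent to `X` and ends at `y` tangent to `Y`. -/
def EndCond (γ γ' : ℝ → Pt) (s : ℝ) (x X y Y : Pt) : Prop :=
  γ 0 = x ∧ γ' 0 = X ∧ γ s = y ∧ γ' s = Y

/-- On `[a,b]` the path is an arc of a unit-radius circle. -/
def ArcOn (γ : ℝ → Pt) (a b : ℝ) : Prop :=
  ∃ c : Pt, ∀ t ∈ Icc a b, ‖γ t - c‖ = 1

/-- On `[a,b]` the (unit-speed) path is affine: a line segment. -/
def SegOn (γ γ' : ℝ → Pt) (a b : ℝ) : Prop :=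
  ∀ t ∈ Icc a b, γ t = γ a + (t - a) • γ' a

/-- `β` is a csc path on `[0,ℓ]` with break points `t₁ ≤ t₂`: circle arc, segment, circle arc
(pieces possibly of zero length). -/
def IsCSC (β β' : ℝ → Pt) (ℓ t₁ t₂ : ℝ) : Prop :=
  0 ≤ t₁ ∧ t₁ ≤ t₂ ∧ t₂ ≤ ℓ ∧ ArcOn β 0 t₁ ∧ SegOn β β' t₁ t₂ ∧ ArcOn β t₂ ℓ

/-- `η` is a cs path on `[0,ℓ]`: a finite concatenation of line segments and unit-circle arcs. -/
def IsCS (η η' : ℝ → Pt) (ℓ : ℝ) : Prop :=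
  ∃ (k : ℕ) (t : ℕ → ℝ), t 0 = 0 ∧ t k = ℓ ∧ (∀ i < k, t i ≤ t (i+1)) ∧
    ∀ i < k, SegOn η η' (t i) (t (i+1)) ∨ ArcOn η (t i) (t (i+1))

/-- Bounded curvature homotopy between `γ` (length `s₀`) and `η` (length `s₁`), both with
endpoint condition `(x,X),(y,Y)`: a one-parameter family of bounded curvature paths `F p`
of length `L p` with that endpoint condition, depending continuously on `p`. -/
def BddHomotopic (x X y Y : Pt) (γ : ℝ → Pt) (s₀ : ℝ) (η : ℝ → Pt) (s₁ : ℝ) : Prop :=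
  ∃ (F F' : ℝ → ℝ → Pt) (L : ℝ → ℝ),
    (∀ p ∈ Icc (0:ℝ) 1, BCPath (F p) (F' p) (L p) ∧
      F p 0 = x ∧ F' p 0 = X ∧ F p (L p) = y ∧ F' p (L p) = Y) ∧
    L 0 = s₀ ∧ L 1 = s₁ ∧
    (∀ t ∈ Icc (0:ℝ) s₀, F 0 t = γ t) ∧
    (∀ t ∈ Icc (0:ℝ) s₁, F 1 t = η t) ∧
    ContinuousOn L (Icc (0:ℝ) 1) ∧
    ContinuousOn (fun q : ℝ × ℝ => F q.1 (q.2 * L q.1)) (Icc (0:ℝ) 1 ×ˢ Icc (0:ℝ) 1)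

/-- `θ` is a continuous turning lift of the unit-speed path with derivative `γ'` on `[0,s]`. -/
def TurningLift (γ' : ℝ → Pt) (s : ℝ) (θ : ℝ → ℝ) : Prop :=
  ContinuousOn θ (Icc (0:ℝ) s) ∧
  ∀ t ∈ Icc (0:ℝ) s,
    γ' t = (WithLp.equiv 2 (Fin 2 → ℝ)).symm ![Real.cos (θ t), Real.sin (θ t)]

/-!
Write the fragment's tangent as `e^{i(θ₀ + φ t)}`. As the fragment is shorter than `1`, its tangent
stays in an open half-plane, so `φ` can be chosen continuous, and comparing arcs with chords makes
it 1-Lipschitz; the chord of the fragment is `e^{iθ₀} W` with `W = ∫₀ˢ e^{iφ}`. The csc path that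
turns through `a`, runs straight for `d` and turns through `φ s - a` has chord
`e^{i(θ₀ + a)} (d + |sin a| + |sin (φ s - a)| + i (V (φ s - a) - V a))`, where `V = signedVersin`.
Matching imaginary parts is an equation `F a = 0`, and `-F' a` is the real residual, i.e. the
required `d`. Comparing `φ` with the extremal cc headings `p + |t + p|` and `q - |t - q|`, where
`p, q = (φ s ∓ s) / 2`, gives `F p ≥ 0 ≥ F q`. At the first zero `a` of `F` in `[p, q]` either
`F' a ≤ 0`, i.e. `d ≥ 0`, or `a = p`; then `F p = 0` forces `φ` to be the extremal heading, and
`d = 0`. All turning angles are at most `s < π`.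
-/

open scoped Complex
open Complex (I)

/-! ### Arcs and chords -/

/-- Equal to `sign α * (1 - cos α)` for `|α| ≤ π`, written as an integral so that its derivative
is `|sin α|` everywhere. -/
def signedVersin (α : ℝ) : ℝ := ∫ τ in (0:ℝ)..α, |sin τ|

lemma hasDerivAt_signedVersin (α : ℝ) : HasDerivAt signedVersin |sin α| α :=
  ((continuous_sin.abs).integral_hasStrictDerivAt 0 α).hasDerivAt

lemma signedVersin_neg (α : ℝ) : signedVersin (-α) = -signedVersin α := by
  have h := intervalIntegral.integral_comp_neg (a := 0) (b := α) fun τ => |sin τ|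
  simp only [sin_neg, abs_neg, neg_zero] at h
  rw [signedVersin, signedVersin, h, intervalIntegral.integral_symm]

lemma signedVersin_of_nonneg {α : ℝ} (h0 : 0 ≤ α) (hπ : α ≤ π) : signedVersin α = 1 - cos α := by
  rw [signedVersin, intervalIntegral.integral_congr (g := sin), integral_sin, cos_zero]
  intro τ hτ
  rw [uIcc_of_le h0] at hτ
  exact abs_of_nonneg (sin_nonneg_of_nonneg_of_le_pi hτ.1 (hτ.2.trans hπ))

lemma integral_abs_sin_add (s c : ℝ) :
    ∫ t in (0:ℝ)..s, |sin (t + c)| = signedVersin (s + c) - signedVersin c := by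
  have hi : ∀ a b : ℝ, IntervalIntegrable (fun τ => |sin τ|) MeasureTheory.volume a b :=
    fun a b => (continuous_sin.abs).intervalIntegrable a b
  rw [intervalIntegral.integral_comp_add_right (fun τ => |sin τ|), zero_add, signedVersin,
    signedVersin, intervalIntegral.integral_interval_sub_left (hi _ _) (hi _ _)]

lemma sin_abs_of_abs_le_pi {u : ℝ} (hu : |u| ≤ π) : sin |u| = |sin u| := by
  rcases abs_cases u with ⟨hu', h0⟩ | ⟨hu', h0⟩ <;> rw [hu'] at hu ⊢
  · exact (abs_of_nonneg (sin_nonneg_of_nonneg_of_le_pi h0 hu)).symm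
  · rw [sin_neg, abs_of_nonpos (sin_nonpos_of_nonpos_of_neg_pi_le h0.le (by linarith))]

lemma abs_sin_le_sin_of_abs_le {τ x : ℝ} (h₁ : |τ| ≤ x) (h₂ : x + |τ| ≤ π) : |sin τ| ≤ sin x := by
  rw [← sin_abs_of_abs_le_pi (by linarith [abs_nonneg τ]), ← sub_nonneg, sin_sub_sin]
  exact mul_nonneg (mul_nonneg zero_le_two (sin_nonneg_of_nonneg_of_le_pi (by linarith)
    (by linarith [abs_nonneg τ]))) (cos_nonneg_of_mem_Icc ⟨by linarith [abs_nonneg τ, pi_pos],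
    by linarith⟩)

lemma abs_sin_lt_sin_of_abs_lt {τ x : ℝ} (h₁ : |τ| < x) (h₂ : x + |τ| < π) : |sin τ| < sin x := by
  rw [← sin_abs_of_abs_le_pi (by linarith [abs_nonneg τ]), ← sub_pos, sin_sub_sin]
  exact mul_pos (mul_pos two_pos (sin_pos_of_pos_of_lt_pi (by linarith)
    (by linarith [abs_nonneg τ]))) (cos_pos_of_mem_Ioo ⟨by linarith [abs_nonneg τ, pi_pos],
    by linarith⟩)

/-- The chord of a unit arc turning through the signed angle `c`, measured in the frame of its
initial tangent. -/
lemma exp_sub_one_div_eq_abs_sin_add_signedVersin {e c : ℝ} (he : e = 1 ∨ e = -1)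
    (hc : e * |c| = c) (hπ : |c| ≤ π) :
    (cexp (c * I) - 1) / (e * I) = |sin c| + signedVersin c * I := by
  have he0 : (e : ℂ) * I ≠ 0 := by rcases he with rfl | rfl <;> simp
  rw [div_eq_iff he0, Complex.exp_ofReal_mul_I]
  rcases he with rfl | rfl
  · rw [one_mul] at hc
    rw [← hc, abs_of_nonneg (sin_nonneg_of_nonneg_of_le_pi (abs_nonneg c) hπ),
      signedVersin_of_nonneg (abs_nonneg c) hπ]
    apply Complex.ext <;> simp
  · have hc' : c ≤ 0 := by linarith [abs_nonneg c]
    have hπ' : -c ≤ π := by rwa [abs_of_nonpos hc'] at hπ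
    rw [← neg_neg c, sin_neg, cos_neg, abs_neg, signedVersin_neg,
      abs_of_nonneg (sin_nonneg_of_nonneg_of_le_pi (by linarith) hπ'),
      signedVersin_of_nonneg (by linarith) hπ']
    apply Complex.ext <;> simp

/-- The displacement of the csc path that turns through the signed angle `a`, runs straight for
`d` and then turns through `b`, in the frame of its segment. -/
def cscChord (a d b : ℝ) : ℂ :=
  (d + |sin a| + |sin b| : ℝ) + (signedVersin b - signedVersin a) * I

lemma cscChord_eq_add (a d b : ℝ) : cscChord a d b = cscChord a 0 b + d := by
  simp only [cscChord]; push_cast; ring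

/-! ### Paths with a prescribed heading -/

abbrev toPt : ℂ ≃ₗᵢ[ℝ] Pt := Complex.orthonormalBasisOneI.repr

lemma norm_exp_mul_I_sub_exp_mul_I (φ ψ : ℝ) :
    ‖cexp (φ * I) - cexp (ψ * I)‖ = 2 * |sin ((φ - ψ) / 2)| := by
  have h : cexp (φ * I) - cexp (ψ * I) = cexp (ψ * I) * (cexp (I * ↑(φ - ψ)) - 1) := by
    rw [mul_sub, mul_one, ← Complex.exp_add]; push_cast; ring_nf
  rw [h, norm_mul, Complex.norm_exp_ofReal_mul_I, one_mul, Complex.norm_exp_I_mul_ofReal_sub_one,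
    norm_mul, Real.norm_eq_abs, Real.norm_eq_abs, abs_two]

lemma lipschitzWith_exp_mul_I : LipschitzWith 1 fun θ : ℝ => cexp (θ * I) := by
  refine LipschitzWith.of_dist_le_mul fun φ ψ => ?_
  rw [dist_eq_norm, norm_exp_mul_I_sub_exp_mul_I, NNReal.coe_one, one_mul, Real.dist_eq]
  linarith [abs_sin_le_abs (x := (φ - ψ) / 2), abs_div (φ - ψ) (2 : ℝ), abs_two (α := ℝ)]

def headingPath (x : ℂ) (Θ : ℝ → ℝ) (t : ℝ) : ℂ := x + ∫ τ in (0:ℝ)..t, cexp (Θ τ * I)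

section headingPath

variable {x : ℂ} {Θ : ℝ → ℝ}

lemma continuous_exp_heading (hΘ : Continuous Θ) : Continuous fun τ => cexp (Θ τ * I) := by
  fun_prop

lemma hasDerivAt_headingPath (hΘ : Continuous Θ) (t : ℝ) :
    HasDerivAt (headingPath x Θ) (cexp (Θ t * I)) t :=
  (((continuous_exp_heading hΘ).integral_hasStrictDerivAt 0 t).hasDerivAt).const_add x

lemma headingPath_sub (hΘ : Continuous Θ) (t c : ℝ) :
    headingPath x Θ t - headingPath x Θ c = ∫ τ in c..t, cexp (Θ τ * I) := by
  have hi := continuous_exp_heading hΘ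
  rw [headingPath, headingPath, add_sub_add_left_eq_sub,
    intervalIntegral.integral_interval_sub_left (hi.intervalIntegrable _ _)
      (hi.intervalIntegrable _ _)]

lemma headingPath_sub_of_eqOn_affine (hΘ : Continuous Θ) {a b θ e : ℝ} (he : e ≠ 0)
    (hlin : ∀ τ ∈ Icc a b, Θ τ = θ + e * τ) {t c : ℝ} (ht : t ∈ Icc a b) (hc : c ∈ Icc a b) :
    headingPath x Θ t - headingPath x Θ c =
      cexp (Θ c * I) * (cexp (↑(e * (t - c)) * I) - 1) / (e * I) := by
  have hsub : uIcc c t ⊆ Icc a b := uIcc_subset_Icc hc ht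
  have heI : (e : ℂ) * I ≠ 0 := by simp [he]
  rw [headingPath_sub hΘ, intervalIntegral.integral_congr
      (g := fun τ => cexp (θ * I) * cexp ((e * I) * τ)) fun τ hτ => by
        simp only [hlin τ (hsub hτ), ← Complex.exp_add]; push_cast; ring_nf,
    intervalIntegral.integral_const_mul, integral_exp_mul_complex heI, hlin c hc,
    ← mul_div_assoc]
  congr 1
  rw [mul_sub, mul_sub, mul_one, ← Complex.exp_add, ← Complex.exp_add, ← Complex.exp_add]
  push_cast
  ring_nf

lemma headingPath_sub_of_eqOn_const (hΘ : Continuous Θ) {a b θ : ℝ}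
    (hconst : ∀ τ ∈ Icc a b, Θ τ = θ) {t c : ℝ} (ht : t ∈ Icc a b) (hc : c ∈ Icc a b) :
    headingPath x Θ t - headingPath x Θ c = (t - c) * cexp (θ * I) := by
  have hsub : uIcc c t ⊆ Icc a b := uIcc_subset_Icc hc ht
  rw [headingPath_sub hΘ, intervalIntegral.integral_congr (g := fun _ => cexp (θ * I))
    fun τ hτ => by simp only [hconst τ (hsub hτ)], intervalIntegral.integral_const,
    Complex.real_smul]
  push_cast
  ring

lemma bcPath_headingPath (hΘ : LipschitzWith 1 Θ) {ℓ : ℝ} (hℓ : 0 ≤ ℓ) :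
    BCPath (toPt ∘ headingPath x Θ) (fun t => toPt (cexp (Θ t * I))) ℓ where
  nonneg := hℓ
  hasDeriv t _ := (toPt.toContinuousLinearEquiv.hasFDerivAt.comp_hasDerivAt t
    (hasDerivAt_headingPath hΘ.continuous t)).hasDerivWithinAt
  contDeriv := (toPt.continuous.comp (continuous_exp_heading hΘ.continuous)).continuousOn
  unitSpeed t _ := by rw [LinearIsometryEquiv.norm_map, Complex.norm_exp_ofReal_mul_I]
  lipDeriv := LipschitzOnWith.of_dist_le_mul fun t _ t' _ => by
    rw [LinearIsometryEquiv.dist_map]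
    simpa using (lipschitzWith_exp_mul_I.comp hΘ).dist_le_mul t t'

lemma arcOn_headingPath (hΘ : Continuous Θ) {a b θ e : ℝ} (he : e = 1 ∨ e = -1)
    (hlin : ∀ τ ∈ Icc a b, Θ τ = θ + e * τ) : ArcOn (toPt ∘ headingPath x Θ) a b := by
  refine ⟨toPt (headingPath x Θ a - cexp (Θ a * I) / (e * I)), fun t ht => ?_⟩
  have hsub := headingPath_sub_of_eqOn_affine (x := x) hΘ (by rcases he with rfl | rfl <;> norm_num)
    hlin ht ⟨le_rfl, ht.1.trans ht.2⟩
  have hnorm : ‖(e : ℂ) * I‖ = 1 := by rcases he with rfl | rfl <;> simp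
  rw [Function.comp_apply, ← map_sub, LinearIsometryEquiv.norm_map, sub_sub_eq_add_sub,
    add_sub_right_comm, hsub, mul_sub, mul_one, sub_div, sub_add_cancel, mul_div_assoc,
    norm_mul, norm_div, hnorm, div_one, Complex.norm_exp_ofReal_mul_I]
  norm_cast
  rw [Complex.norm_exp_ofReal_mul_I, one_mul]

lemma segOn_headingPath (hΘ : Continuous Θ) {a b θ : ℝ} (hconst : ∀ τ ∈ Icc a b, Θ τ = θ) :
    SegOn (toPt ∘ headingPath x Θ) (fun t => toPt (cexp (Θ t * I))) a b := by
  intro t ht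
  have ha : a ∈ Icc a b := ⟨le_rfl, ht.1.trans ht.2⟩
  show toPt _ = toPt _ + (t - a) • toPt (cexp (Θ a * I))
  rw [hconst a ha, ← map_smul, ← map_add, Complex.real_smul, Complex.ofReal_sub,
    ← sub_eq_iff_eq_add'.1 (headingPath_sub_of_eqOn_const hΘ hconst ht ha)]

end headingPath

lemma abs_min_sub_min_add_abs_max_sub_max_le {t₁ t₂ : ℝ} (h : t₁ ≤ t₂) (t t' : ℝ) :
    |min t t₁ - min t' t₁| + |max t t₂ - max t' t₂| ≤ |t - t'| := by
  wlog h' : t' ≤ t generalizing t t'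
  · rw [abs_sub_comm (min t _), abs_sub_comm (max t _), abs_sub_comm t]
    exact this t' t (le_of_not_ge h')
  rw [abs_of_nonneg (sub_nonneg.2 (min_le_min_right _ h')),
    abs_of_nonneg (sub_nonneg.2 (max_le_max_right _ h')), abs_of_nonneg (sub_nonneg.2 h')]
  simp only [min_def, max_def]
  split_ifs <;> linarith

lemma lipschitzWith_add_mul_min_add_mul_max (c : ℝ) {t₁ t₂ e₁ e₂ : ℝ} (h : t₁ ≤ t₂)
    (he₁ : |e₁| ≤ 1) (he₂ : |e₂| ≤ 1) :
    LipschitzWith 1 fun t => c + e₁ * min t t₁ + e₂ * max t t₂ := by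
  refine LipschitzWith.of_dist_le_mul fun t t' => ?_
  rw [NNReal.coe_one, one_mul, Real.dist_eq, Real.dist_eq]
  calc |c + e₁ * min t t₁ + e₂ * max t t₂ - (c + e₁ * min t' t₁ + e₂ * max t' t₂)|
      = |e₁ * (min t t₁ - min t' t₁) + e₂ * (max t t₂ - max t' t₂)| := by ring_nf
    _ ≤ |e₁| * |min t t₁ - min t' t₁| + |e₂| * |max t t₂ - max t' t₂| := by
        rw [← abs_mul, ← abs_mul]; exact abs_add_le _ _
    _ ≤ |min t t₁ - min t' t₁| + |max t t₂ - max t' t₂| := by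
        gcongr <;> exact mul_le_of_le_one_left (abs_nonneg _) ‹_›
    _ ≤ |t - t'| := abs_min_sub_min_add_abs_max_sub_max_le h t t'

def turnSign (a : ℝ) : ℝ := if a < 0 then -1 else 1

lemma turnSign_eq_one_or_eq_neg_one (a : ℝ) : turnSign a = 1 ∨ turnSign a = -1 := by
  unfold turnSign; split_ifs <;> simp

lemma turnSign_mul_abs (a : ℝ) : turnSign a * |a| = a := by
  unfold turnSign; split_ifs with h
  · rw [abs_of_neg h]; ring
  · rw [abs_of_nonneg (not_lt.1 h), one_mul]

lemma abs_turnSign (a : ℝ) : |turnSign a| = 1 := by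
  rcases turnSign_eq_one_or_eq_neg_one a with h | h <;> simp [h]

/-- The heading of the csc path turning through `a`, running straight for `d` and turning
through `b`, starting with heading `θ₀`. -/
def cscHeading (θ₀ a d b t : ℝ) : ℝ :=
  θ₀ + turnSign a * min t |a| + turnSign b * (max t (|a| + d) - (|a| + d))

section cscHeading

variable {θ₀ a d b : ℝ}

lemma lipschitzWith_cscHeading (hd : 0 ≤ d) : LipschitzWith 1 (cscHeading θ₀ a d b) := by
  convert lipschitzWith_add_mul_min_add_mul_max (θ₀ - turnSign b * (|a| + d))
    (le_add_of_nonneg_right hd) (abs_turnSign a).le (abs_turnSign b).le using 2 with t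
  unfold cscHeading; ring

lemma cscHeading_of_mem_Icc_first (hd : 0 ≤ d) {τ : ℝ} (hτ : τ ∈ Icc 0 |a|) :
    cscHeading θ₀ a d b τ = θ₀ + turnSign a * τ := by
  rw [cscHeading, min_eq_left hτ.2, max_eq_right (hτ.2.trans (le_add_of_nonneg_right hd))]; ring

lemma cscHeading_of_mem_Icc_segment {τ : ℝ} (hτ : τ ∈ Icc |a| (|a| + d)) :
    cscHeading θ₀ a d b τ = θ₀ + a := by
  rw [cscHeading, min_eq_right hτ.1, max_eq_right hτ.2, turnSign_mul_abs]; ring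

lemma cscHeading_of_mem_Icc_second (hd : 0 ≤ d) {τ : ℝ} (hτ : τ ∈ Icc (|a| + d) (|a| + d + |b|)) :
    cscHeading θ₀ a d b τ = θ₀ + a - turnSign b * (|a| + d) + turnSign b * τ := by
  rw [cscHeading, min_eq_right ((le_add_of_nonneg_right hd).trans hτ.1), max_eq_left hτ.1,
    turnSign_mul_abs]
  ring

lemma headingPath_cscHeading (x : ℂ) (hd : 0 ≤ d) (ha : |a| ≤ π) (hb : |b| ≤ π) :
    headingPath x (cscHeading θ₀ a d b) (|a| + d + |b|) =
      x + cexp ((θ₀ + a) * I) * cscChord a d b := by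
  have hΘ := (lipschitzWith_cscHeading (θ₀ := θ₀) (a := a) (b := b) hd).continuous
  have ha₀ : 0 ≤ |a| := abs_nonneg a
  have had : |a| ≤ |a| + d := le_add_of_nonneg_right hd
  have hadb : |a| + d ≤ |a| + d + |b| := le_add_of_nonneg_right (abs_nonneg b)
  have hne : ∀ c, turnSign c ≠ 0 := fun c => by
    rcases turnSign_eq_one_or_eq_neg_one c with h | h <;> norm_num [h]
  have first := headingPath_sub_of_eqOn_affine (x := x) hΘ (hne a)
    (fun τ hτ => cscHeading_of_mem_Icc_first hd hτ) ⟨le_rfl, ha₀⟩ ⟨ha₀, le_rfl⟩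
  have seg := headingPath_sub_of_eqOn_const (x := x) hΘ
    (fun τ hτ => cscHeading_of_mem_Icc_segment hτ) ⟨had, le_rfl⟩ ⟨le_rfl, had⟩
  have second := headingPath_sub_of_eqOn_affine (x := x) hΘ (hne b)
    (fun τ hτ => cscHeading_of_mem_Icc_second hd hτ) ⟨hadb, le_rfl⟩ ⟨le_rfl, hadb⟩
  have chord₁ := exp_sub_one_div_eq_abs_sin_add_signedVersin (c := -a) (e := -turnSign a)
    (by rcases turnSign_eq_one_or_eq_neg_one a with h | h <;> simp [h])
    (by rw [abs_neg, neg_mul, turnSign_mul_abs]) (by rwa [abs_neg])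
  have chord₂ := exp_sub_one_div_eq_abs_sin_add_signedVersin (turnSign_eq_one_or_eq_neg_one b)
    (turnSign_mul_abs b) hb
  -- the first arc is measured backwards from its end `|a|`, in the frame of the segment
  rw [cscHeading_of_mem_Icc_segment ⟨le_rfl, had⟩, mul_div_assoc,
    show turnSign a * (0 - |a|) = -a by linear_combination -turnSign_mul_abs a,
    ← neg_neg (turnSign a : ℂ), neg_mul, div_neg, ← Complex.ofReal_neg, chord₁] at first
  rw [cscHeading_of_mem_Icc_segment ⟨had, le_rfl⟩, mul_div_assoc,
    show turnSign b * (|a| + d + |b| - (|a| + d)) = b by linear_combination turnSign_mul_abs b,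
    chord₂] at second
  rw [← Complex.ofReal_sub, add_sub_cancel_left] at seg
  have hx : headingPath x (cscHeading θ₀ a d b) 0 = x := by simp [headingPath]
  rw [cscChord, sin_neg, abs_neg, signedVersin_neg] at *
  push_cast at *
  linear_combination second + seg - first + hx

end cscHeading

theorem exists_isCSC_endCond_cscChord (x : ℂ) (θ₀ a d b : ℝ) (ha : |a| < π) (hd : 0 ≤ d)
    (hb : |b| < π) :
    ∃ (β β' : ℝ → Pt) (ℓ t₁ t₂ : ℝ), BCPath β β' ℓ ∧
      EndCond β β' ℓ (toPt x) (toPt (cexp (θ₀ * I)))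
        (toPt (x + cexp ((θ₀ + a) * I) * cscChord a d b)) (toPt (cexp ((θ₀ + a + b) * I))) ∧
      IsCSC β β' ℓ t₁ t₂ ∧ t₁ < π ∧ ℓ - t₂ < π := by
  have hΘ := lipschitzWith_cscHeading (θ₀ := θ₀) (a := a) (b := b) hd
  have had : |a| ≤ |a| + d := le_add_of_nonneg_right hd
  have hadb : |a| + d ≤ |a| + d + |b| := le_add_of_nonneg_right (abs_nonneg b)
  have hΘ0 : cscHeading θ₀ a d b 0 = θ₀ := by
    rw [cscHeading_of_mem_Icc_first hd ⟨le_rfl, abs_nonneg a⟩]; ring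
  have hΘℓ : cscHeading θ₀ a d b (|a| + d + |b|) = θ₀ + a + b := by
    rw [cscHeading_of_mem_Icc_second hd ⟨hadb, le_rfl⟩]; linear_combination turnSign_mul_abs b
  refine ⟨toPt ∘ headingPath x (cscHeading θ₀ a d b),
    fun t => toPt (cexp (cscHeading θ₀ a d b t * I)), |a| + d + |b|, |a|, |a| + d,
    bcPath_headingPath hΘ ((abs_nonneg a).trans (had.trans hadb)), ⟨?_, ?_, ?_, ?_⟩,
    ⟨abs_nonneg a, had, hadb,
      arcOn_headingPath hΘ.continuous (turnSign_eq_one_or_eq_neg_one a)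
        fun τ hτ => cscHeading_of_mem_Icc_first hd hτ,
      segOn_headingPath hΘ.continuous fun τ hτ => cscHeading_of_mem_Icc_segment hτ,
      arcOn_headingPath hΘ.continuous (turnSign_eq_one_or_eq_neg_one b)
        fun τ hτ => cscHeading_of_mem_Icc_second hd hτ⟩, ha, by rwa [add_sub_cancel_left]⟩
  · simp [headingPath]
  · simp only [hΘ0]
  · rw [Function.comp_apply, headingPath_cscHeading x hd ha.le hb.le]
  · simp only [hΘℓ]; push_cast; rfl

/-! ### The angle of a fragment's tangent -/

open Filter Topology in
/-- `hω` and `hω0` say that `ω h = h + o(h)`. -/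
lemma lipschitzOnWith_one_of_abs_sub_le {f ω : ℝ → ℝ} {p q : ℝ} (hf : ContinuousOn f (Icc p q))
    (hω : HasDerivAt ω 1 0) (hω0 : ω 0 = 0)
    (hbound : ∀ a ∈ Icc p q, ∀ b ∈ Icc p q, a ≤ b → |f b - f a| ≤ ω (b - a)) :
    LipschitzOnWith 1 f (Icc p q) := by
  have key : ∀ a ∈ Icc p q, ∀ b ∈ Icc a q, |f b - f a| ≤ b - a := by
    intro a ha
    have hsub : Icc a q ⊆ Icc p q := Icc_subset_Icc_left ha.1
    refine image_le_of_liminf_slope_right_le_deriv_boundary (f := fun t => |f t - f a|)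
      (B' := fun _ => 1) ((hf.mono hsub).sub continuousOn_const).abs (by simp)
      (continuousOn_id.sub continuousOn_const)
      (fun x _ => ((hasDerivAt_id x).sub_const a).hasDerivWithinAt) ?_
    intro x hx r hr
    have hshift : Tendsto (fun z => z - x) (𝓝[>] x) (𝓝[>] 0) :=
      tendsto_nhdsWithin_iff.2 ⟨((continuous_sub_right x).tendsto' x 0 (sub_self x)).mono_left
        nhdsWithin_le_nhds, eventually_nhdsWithin_of_forall fun z (hz : x < z) => sub_pos.2 hz⟩
    have hslope := (hω.tendsto_slope_zero_right.comp hshift).eventually (gt_mem_nhds hr)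
    refine Eventually.frequently ((hslope.and (Ioo_mem_nhdsGT hx.2)).mono ?_)
    rintro z ⟨hz, hxz, hzq⟩
    simp only [Function.comp_apply, zero_add, hω0, sub_zero, smul_eq_mul] at hz
    have hxz' : 0 < z - x := sub_pos.2 hxz
    calc slope (fun t => |f t - f a|) x z = (|f z - f a| - |f x - f a|) / (z - x) := by
          rw [slope_def_field]
      _ ≤ ω (z - x) / (z - x) := by
          gcongr
          calc |f z - f a| - |f x - f a| ≤ |f z - f x| := by
                simpa using abs_sub_abs_le_abs_sub (f z - f a) (f x - f a)
            _ ≤ ω (z - x) := hbound x (hsub ⟨hx.1, hx.2.le⟩) z (hsub ⟨hx.1.trans hxz.le, hzq.le⟩)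
                hxz.le
      _ < r := by rwa [div_eq_inv_mul]
  refine LipschitzOnWith.of_dist_le_mul fun b hb a ha => ?_
  rw [NNReal.coe_one, one_mul, Real.dist_eq, Real.dist_eq]
  rcases le_total a b with hab | hab
  · exact (key a ha b ⟨hab, hb.2⟩).trans (le_abs_self _)
  · rw [abs_sub_comm, abs_sub_comm b]; exact (key b hb a ⟨hab, ha.2⟩).trans (le_abs_self _)

lemma abs_le_arcsin_of_abs_sin_le {u c : ℝ} (hu : |u| ≤ π / 2) (h : |sin u| ≤ c) :
    |u| ≤ arcsin c := by
  have hsin := sin_abs_of_abs_le_pi (hu.trans (by linarith [pi_pos]))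
  calc |u| = arcsin (sin |u|) := (arcsin_sin (by linarith [abs_nonneg u, pi_pos]) hu).symm
    _ ≤ arcsin c := monotone_arcsin (hsin ▸ h)

lemma hasDerivAt_two_mul_arcsin_half : HasDerivAt (fun h => 2 * arcsin (h / 2)) 1 0 := by
  have h := ((hasDerivAt_arcsin (by norm_num) (by norm_num)).comp (0:ℝ)
    ((hasDerivAt_id (0:ℝ)).div_const 2)).const_mul 2
  exact h.congr_deriv (by norm_num)

/-- On an interval of length less than `1` the direction `z` stays in the open half-plane centred
at `z 0`, where `arg (z t / z 0)` is continuous; comparing arcs with chords makes it 1-Lipschitz. -/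
lemma exists_lipschitz_arg_lift {z : ℝ → ℂ} {s : ℝ} (hs : s < 1)
    (hunit : ∀ t ∈ Icc 0 s, ‖z t‖ = 1) (hlip : LipschitzOnWith 1 z (Icc 0 s)) :
    ∃ θ₀ : ℝ, ∃ φ : ℝ → ℝ, φ 0 = 0 ∧ LipschitzOnWith 1 φ (Icc 0 s) ∧
      ∀ t ∈ Icc 0 s, z t = cexp ((θ₀ + φ t) * I) := by
  set w : ℝ → ℂ := fun t => z t / z 0
  have hw : ∀ t ∈ Icc 0 s, ‖w t‖ = 1 := fun t ht => by
    rw [norm_div, hunit t ht, hunit 0 ⟨le_rfl, ht.1.trans ht.2⟩, div_one]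
  have hz0 : ∀ t ∈ Icc 0 s, z 0 ≠ 0 := fun t ht => by
    rw [← norm_ne_zero_iff, hunit 0 ⟨le_rfl, ht.1.trans ht.2⟩]; norm_num
  have hdist : ∀ a ∈ Icc 0 s, ∀ b ∈ Icc 0 s, ‖w b - w a‖ ≤ |b - a| := fun a ha b hb => by
    rw [← sub_div, norm_div, hunit 0 ⟨le_rfl, ha.1.trans ha.2⟩, div_one, ← dist_eq_norm,
      ← Real.dist_eq]
    simpa using hlip.dist_le_mul b hb a ha
  have hexp : ∀ t ∈ Icc 0 s, w t = cexp ((w t).arg * I) := fun t ht => by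
    simpa [hw t ht] using (Complex.norm_mul_exp_arg_mul_I (w t)).symm
  have hre : ∀ t ∈ Icc 0 s, 0 < (w t).re := fun t ht => by
    have h1 : w 0 = 1 := div_self (hz0 t ht)
    have h2 := hdist 0 ⟨le_rfl, ht.1.trans ht.2⟩ t ht
    rw [h1, sub_zero, abs_of_nonneg ht.1] at h2
    have h3 := Complex.abs_re_le_norm (w t - 1)
    rw [Complex.sub_re, Complex.one_re] at h3
    linarith [(abs_le.1 (h3.trans h2)).1, ht.2]
  have hz : ∀ t ∈ Icc 0 s, z t = cexp (((z 0).arg + (w t).arg) * I) := fun t ht => by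
    have h0 := Complex.norm_mul_exp_arg_mul_I (z 0)
    rw [hunit 0 ⟨le_rfl, ht.1.trans ht.2⟩, Complex.ofReal_one, one_mul] at h0
    rw [add_mul, Complex.exp_add, h0, ← hexp t ht, mul_div_cancel₀ _ (hz0 t ht)]
  refine ⟨(z 0).arg, fun t => (w t).arg, by simp [w], ?_, hz⟩
  have hcont : ContinuousOn (fun t => (w t).arg) (Icc 0 s) := fun t ht =>
    (Complex.continuousAt_arg (Or.inl (hre t ht))).comp_continuousWithinAt
      ((hlip.continuousOn t ht).div_const (z 0))
  refine lipschitzOnWith_one_of_abs_sub_le hcont hasDerivAt_two_mul_arcsin_half (by simp)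
    fun a ha b hb hab => ?_
  have harg : ∀ t ∈ Icc 0 s, |(w t).arg| < π / 2 := fun t ht =>
    Complex.abs_arg_lt_pi_div_two_iff.2 (Or.inl (hre t ht))
  have hchord := hdist a ha b hb
  rw [hexp b hb, hexp a ha, norm_exp_mul_I_sub_exp_mul_I, abs_of_nonneg (sub_nonneg.2 hab)]
    at hchord
  have := abs_le_arcsin_of_abs_sin_le (u := ((w b).arg - (w a).arg) / 2) (c := (b - a) / 2)
    (by rw [abs_div, abs_two]; linarith [abs_sub (w b).arg (w a).arg, harg a ha, harg b hb])
    (by linarith)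
  rw [abs_div, abs_two] at this
  linarith

/-! ### Choice of the first turning angle -/

open Filter Topology in
lemma exists_eq_zero_and_eq_left_or_deriv_nonpos {f f' : ℝ → ℝ} {p q : ℝ} (hpq : p ≤ q)
    (hf : ∀ x ∈ Icc p q, HasDerivAt f (f' x) x) (hp : 0 ≤ f p) (hq : f q ≤ 0) :
    ∃ a ∈ Icc p q, f a = 0 ∧ (a = p ∨ f' a ≤ 0) := by
  set Z := Icc p q ∩ f ⁻¹' Iic 0
  have hZ : IsClosed Z := ContinuousOn.preimage_isClosed_of_isClosed
    (fun x hx => (hf x hx).continuousAt.continuousWithinAt) isClosed_Icc isClosed_Iic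
  have hZbdd : BddBelow Z := bddBelow_Icc.mono inter_subset_left
  have haZ : sInf Z ∈ Z := hZ.csInf_mem ⟨q, ⟨hpq, le_rfl⟩, hq⟩ hZbdd
  set a := sInf Z
  have hpos : ∀ x ∈ Ico p a, 0 < f x := fun x hx => by
    by_contra! h
    exact (csInf_le hZbdd ⟨⟨hx.1, hx.2.le.trans haZ.1.2⟩, h⟩).not_gt hx.2
  refine ⟨a, haZ.1, ?_⟩
  rcases haZ.1.1.eq_or_lt with hpa | hpa
  · exact ⟨le_antisymm haZ.2 (hpa ▸ hp), Or.inl hpa.symm⟩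
  have hleft : ∀ᶠ x in 𝓝[<] a, x ∈ Ioo p a := Ioo_mem_nhdsLT hpa
  have hfa : f a = 0 := le_antisymm haZ.2 <| ge_of_tendsto
    ((hf a haZ.1).continuousAt.tendsto.mono_left nhdsWithin_le_nhds)
    (hleft.mono fun x hx => (hpos x ⟨hx.1.le, hx.2⟩).le)
  refine ⟨hfa, Or.inr (le_of_tendsto ((hasDerivAt_iff_tendsto_slope.1 (hf a haZ.1)).mono_left
    (nhdsWithin_mono a fun x (hx : x ∈ Iio a) => ne_of_lt hx)) (hleft.mono fun x hx => ?_))⟩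
  rw [slope_def_field, hfa, sub_zero]
  exact div_nonpos_of_nonneg_of_nonpos (hpos x ⟨hx.1.le, hx.2⟩).le (sub_nonpos.2 hx.2.le)

/-- How far the chord `W` (in the frame turned by `α`) is from the chord of the cc path turning
through `α` and then `δ - α`. -/
def cscResidual (W : ℂ) (δ α : ℝ) : ℂ := W * cexp (-α * I) - cscChord α 0 (δ - α)

lemma cscResidual_re (W : ℂ) (δ α : ℝ) :
    (cscResidual W δ α).re = (W * cexp (-α * I)).re - |sin α| - |sin (δ - α)| := by
  simp [cscResidual, cscChord]; ring

lemma cscResidual_im (W : ℂ) (δ α : ℝ) :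
    (cscResidual W δ α).im = (W * cexp (-α * I)).im + signedVersin α - signedVersin (δ - α) := by
  simp [cscResidual, cscChord]; ring

lemma hasDerivAt_cscResidual_im (W : ℂ) (δ α : ℝ) :
    HasDerivAt (fun α => (cscResidual W δ α).im) (-(cscResidual W δ α).re) α := by
  have hrot : HasDerivAt (fun α : ℝ => W * cexp (-α * I)) (W * (cexp (-α * I) * -I)) α := by
    simpa using ((((hasDerivAt_id α).ofReal_comp).neg.mul_const I).cexp).const_mul W
  have hG := (hasDerivAt_signedVersin (δ - α)).comp α ((hasDerivAt_id α).const_sub δ)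
  have h : HasDerivAt (fun α : ℝ => (W * cexp (-α * I)).im + signedVersin α - signedVersin (δ - α))
      _ α := ((Complex.imCLM.hasFDerivAt.comp_hasDerivAt α hrot).add
        (hasDerivAt_signedVersin α)).sub hG
  simp only [cscResidual_im, cscResidual_re]
  convert h using 1
  simp only [Complex.imCLM_apply, mul_neg, Complex.neg_im,
    ← mul_assoc, Complex.mul_I_im]
  ring

def headingChord (φ : ℝ → ℝ) (s : ℝ) : ℂ := ∫ t in (0:ℝ)..s, cexp (φ t * I)

section headingChord

variable {φ : ℝ → ℝ} {s t : ℝ}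

lemma headingChord_mul_exp_neg_re_im (hs : 0 ≤ s) (hφ : ContinuousOn φ (Icc 0 s)) (α : ℝ) :
    (headingChord φ s * cexp (-α * I)).re = ∫ t in (0:ℝ)..s, cos (φ t - α) ∧
      (headingChord φ s * cexp (-α * I)).im = ∫ t in (0:ℝ)..s, sin (φ t - α) := by
  have hrot : (fun t => cexp (φ t * I) * cexp (-α * I)) = fun t => cexp (↑(φ t - α) * I) := by
    funext t; rw [← Complex.exp_add]; push_cast; ring_nf
  have hi : IntervalIntegrable (fun t => cexp (↑(φ t - α) * I)) MeasureTheory.volume 0 s :=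
    ContinuousOn.intervalIntegrable_of_Icc hs (by fun_prop)
  rw [headingChord, ← intervalIntegral.integral_mul_const, hrot]
  refine ⟨?_, ?_⟩
  · simpa only [RCLike.re_to_complex, Complex.exp_ofReal_mul_I_re] using
      (intervalIntegral.intervalIntegral_re hi).symm
  · simpa only [RCLike.im_to_complex, Complex.exp_ofReal_mul_I_im] using
      (intervalIntegral.intervalIntegral_im hi).symm

lemma abs_le_and_abs_sub_le_of_lipschitzOnWith (hφ0 : φ 0 = 0)
    (hlip : LipschitzOnWith 1 φ (Icc 0 s)) {t : ℝ} (ht : t ∈ Icc 0 s) :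
    |φ t| ≤ t ∧ |φ s - φ t| ≤ s - t := by
  have h0 : (0 : ℝ) ∈ Icc 0 s := ⟨le_rfl, ht.1.trans ht.2⟩
  have hs : s ∈ Icc 0 s := ⟨ht.1.trans ht.2, le_rfl⟩
  have h₁ := hlip.dist_le_mul t ht 0 h0
  have h₂ := hlip.dist_le_mul s hs t ht
  simp only [Real.dist_eq, NNReal.coe_one, one_mul, hφ0, sub_zero] at h₁ h₂
  rw [abs_of_nonneg ht.1] at h₁
  rw [abs_of_nonneg (sub_nonneg.2 ht.2)] at h₂
  exact ⟨h₁, h₂⟩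

variable (hφ0 : φ 0 = 0) (hlip : LipschitzOnWith 1 φ (Icc 0 s)) (hs : s < π / 2)
include hφ0 hlip hs

lemma abs_add_le_heading_sub (ht : t ∈ Icc 0 s) :
    |t + (φ s - s) / 2| ≤ φ t - (φ s - s) / 2 ∧ φ t - (φ s - s) / 2 + |t + (φ s - s) / 2| < π := by
  obtain ⟨h₁, h₂⟩ := abs_le_and_abs_sub_le_of_lipschitzOnWith hφ0 hlip ht
  rcases abs_cases (t + (φ s - s) / 2) with ⟨h, -⟩ | ⟨h, -⟩ <;> rw [h] <;>
    constructor <;> linarith [abs_le.1 h₁, abs_le.1 h₂, ht.2]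

lemma abs_sub_le_sub_heading (ht : t ∈ Icc 0 s) :
    |t - (φ s + s) / 2| ≤ (φ s + s) / 2 - φ t ∧ (φ s + s) / 2 - φ t + |t - (φ s + s) / 2| < π := by
  obtain ⟨h₁, h₂⟩ := abs_le_and_abs_sub_le_of_lipschitzOnWith hφ0 hlip ht
  rcases abs_cases (t - (φ s + s) / 2) with ⟨h, -⟩ | ⟨h, -⟩ <;> rw [h] <;>
    constructor <;> linarith [abs_le.1 h₁, abs_le.1 h₂, ht.2]

lemma cscResidual_im_nonpos (hs0 : 0 ≤ s) :
    (cscResidual (headingChord φ s) (φ s) ((φ s + s) / 2)).im ≤ 0 := by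
  set q := (φ s + s) / 2 with hq
  have hφc := hlip.continuousOn
  have hcomp : ∫ t in (0:ℝ)..s, sin (φ t - q) ≤ ∫ t in (0:ℝ)..s, -|sin (t + -q)| := by
    refine intervalIntegral.integral_mono_on hs0
      (ContinuousOn.intervalIntegrable_of_Icc hs0 (by fun_prop))
      ((by fun_prop : Continuous fun t => -|sin (t + -q)|).intervalIntegrable _ _) fun t ht => ?_
    obtain ⟨h₁, h₂⟩ := abs_sub_le_sub_heading hφ0 hlip hs ht
    rw [← hq] at h₁ h₂
    have := abs_sin_le_sin_of_abs_le h₁ h₂.le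
    rw [← sub_eq_add_neg, ← neg_sub q, sin_neg]
    linarith
  rw [intervalIntegral.integral_neg, integral_abs_sin_add, signedVersin_neg] at hcomp
  rw [cscResidual_im, (headingChord_mul_exp_neg_re_im hs0 hφc q).2,
    show φ s - q = -(s + -q) by ring, signedVersin_neg]
  linarith

lemma integral_abs_sin_le_integral_sin (hs0 : 0 ≤ s) :
    ∫ t in (0:ℝ)..s, |sin (t + (φ s - s) / 2)| ≤ ∫ t in (0:ℝ)..s, sin (φ t - (φ s - s) / 2) := by
  have hφc := hlip.continuousOn
  refine intervalIntegral.integral_mono_on hs0 ((by fun_prop : Continuous _).intervalIntegrable _ _)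
    (ContinuousOn.intervalIntegrable_of_Icc hs0 (by fun_prop)) fun t ht => ?_
  obtain ⟨h₁, h₂⟩ := abs_add_le_heading_sub hφ0 hlip hs ht
  exact abs_sin_le_sin_of_abs_le h₁ h₂.le

lemma cscResidual_im_nonneg (hs0 : 0 ≤ s) :
    0 ≤ (cscResidual (headingChord φ s) (φ s) ((φ s - s) / 2)).im := by
  have hcomp := integral_abs_sin_le_integral_sin hφ0 hlip hs hs0
  rw [integral_abs_sin_add] at hcomp
  rw [cscResidual_im, (headingChord_mul_exp_neg_re_im hs0 hlip.continuousOn _).2,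
    show φ s - (φ s - s) / 2 = s + (φ s - s) / 2 by ring]
  linarith

/-- In the boundary case the path is the extremal cc path itself, whose residual vanishes. -/
lemma cscResidual_re_nonneg_of_im_eq_zero (hs0 : 0 < s)
    (him : (cscResidual (headingChord φ s) (φ s) ((φ s - s) / 2)).im = 0) :
    0 ≤ (cscResidual (headingChord φ s) (φ s) ((φ s - s) / 2)).re := by
  set p := (φ s - s) / 2 with hp
  have hφc := hlip.continuousOn
  have hextremal : ∀ t ∈ Icc 0 s, φ t - p = |t + p| := by
    by_contra! hne
    obtain ⟨t₀, ht₀, hne⟩ := hne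
    have hlt : ∫ t in (0:ℝ)..s, |sin (t + p)| < ∫ t in (0:ℝ)..s, sin (φ t - p) := by
      refine intervalIntegral.integral_lt_integral_of_continuousOn_of_le_of_exists_lt hs0
        (by fun_prop) (by fun_prop) (fun t ht => ?_) ⟨t₀, ht₀, ?_⟩
      · obtain ⟨h₁, h₂⟩ := abs_add_le_heading_sub hφ0 hlip hs (Ioc_subset_Icc_self ht)
        exact abs_sin_le_sin_of_abs_le h₁ h₂.le
      · obtain ⟨h₁, h₂⟩ := abs_add_le_heading_sub hφ0 hlip hs ht₀
        exact abs_sin_lt_sin_of_abs_lt (h₁.lt_of_ne' hne) h₂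
    rw [integral_abs_sin_add] at hlt
    rw [cscResidual_im, (headingChord_mul_exp_neg_re_im hs0.le hφc p).2,
      show φ s - p = s + p by ring] at him
    linarith
  have hcos : ∫ t in (0:ℝ)..s, cos (φ t - p) = sin (s + p) - sin p := by
    rw [intervalIntegral.integral_congr (g := fun t => cos (t + p)) fun t ht => by
      rw [hextremal t (by rwa [uIcc_of_le hs0.le] at ht), cos_abs],
      intervalIntegral.integral_comp_add_right (fun t => cos t), integral_cos, zero_add]
  have hδ := abs_le.1 (abs_le_and_abs_sub_le_of_lipschitzOnWith hφ0 hlip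
    (t := s) ⟨hs0.le, le_rfl⟩).1
  rw [cscResidual_re, (headingChord_mul_exp_neg_re_im hs0.le hφc p).1, hcos,
    show φ s - p = s + p by ring,
    abs_of_nonpos (sin_nonpos_of_nonpos_of_neg_pi_le (by linarith) (by linarith)),
    abs_of_nonneg (sin_nonneg_of_nonneg_of_le_pi (by linarith) (by linarith))]
  linarith

end headingChord

theorem exists_cscChord_eq_headingChord {φ : ℝ → ℝ} {s : ℝ} (hφ0 : φ 0 = 0)
    (hlip : LipschitzOnWith 1 φ (Icc 0 s)) (hs0 : 0 ≤ s) (hs : s < π / 2) :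
    ∃ a d : ℝ, 0 ≤ d ∧ |a| ≤ s ∧ |φ s - a| ≤ s ∧
      headingChord φ s = cexp (a * I) * cscChord a d (φ s - a) := by
  rcases hs0.eq_or_lt with rfl | hs_pos
  · exact ⟨0, 0, le_rfl, by simp, by simp [hφ0], by simp [headingChord, cscChord, hφ0]⟩
  set W := headingChord φ s
  have hδ := abs_le.1 (abs_le_and_abs_sub_le_of_lipschitzOnWith hφ0 hlip
    (t := s) ⟨hs0, le_rfl⟩).1
  obtain ⟨a, ha, him, hcase⟩ := exists_eq_zero_and_eq_left_or_deriv_nonpos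
    (f := fun α => (cscResidual W (φ s) α).im) (by linarith)
    (fun α _ => hasDerivAt_cscResidual_im W (φ s) α)
    (cscResidual_im_nonneg hφ0 hlip hs hs0) (cscResidual_im_nonpos hφ0 hlip hs hs0)
  have hd : 0 ≤ (cscResidual W (φ s) a).re := by
    rcases hcase with rfl | hderiv
    · exact cscResidual_re_nonneg_of_im_eq_zero hφ0 hlip hs hs_pos him
    · linarith
  refine ⟨a, _, hd, abs_le.2 ⟨by linarith [ha.1], by linarith [ha.2]⟩,
    abs_le.2 ⟨by linarith [ha.2], by linarith [ha.1]⟩, ?_⟩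
  set d := (cscResidual W (φ s) a).re
  have hres : cscResidual W (φ s) a = d :=
    Complex.ext (by simp [d]) (by simpa using him)
  rw [cscResidual, sub_eq_iff_eq_add', ← cscChord_eq_add] at hres
  rw [← hres, mul_left_comm, ← Complex.exp_add, neg_mul, add_neg_cancel, Complex.exp_zero,
    mul_one]

namespace BCPath

variable {γ γ' : ℝ → Pt} {s : ℝ}

lemma integral_eq_sub (h : BCPath γ γ' s) : ∫ t in (0:ℝ)..s, γ' t = γ s - γ 0 :=
  intervalIntegral.integral_eq_sub_of_hasDeriv_right_of_le h.nonneg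
    (fun t ht => (h.hasDeriv t ht).continuousWithinAt)
    (fun t ht => (h.hasDeriv t (Ioo_subset_Icc_self ht)).mono_of_mem_nhdsWithin
      (Icc_mem_nhdsGT_of_mem ⟨ht.1.le, ht.2⟩))
    (h.contDeriv.intervalIntegrable_of_Icc h.nonneg)

lemma exists_lipschitz_lift (h : BCPath γ γ' s) (hs : s < 1) :
    ∃ θ₀ : ℝ, ∃ φ : ℝ → ℝ, φ 0 = 0 ∧ LipschitzOnWith 1 φ (Icc 0 s) ∧
      ∀ t ∈ Icc 0 s, γ' t = toPt (cexp ((θ₀ + φ t) * I)) := by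
  obtain ⟨θ₀, φ, hφ0, hφ, hz⟩ := exists_lipschitz_arg_lift (z := fun t => toPt.symm (γ' t)) hs
    (fun t ht => by rw [LinearIsometryEquiv.norm_map, h.unitSpeed t ht])
    (LipschitzOnWith.of_dist_le_mul fun t ht t' ht' => by
      rw [LinearIsometryEquiv.dist_map]; exact h.lipDeriv.dist_le_mul t ht t' ht')
  exact ⟨θ₀, φ, hφ0, hφ, fun t ht => by rw [← hz t ht, toPt.apply_symm_apply]⟩

lemma sub_eq_mul_headingChord (h : BCPath γ γ' s) {θ₀ : ℝ} {φ : ℝ → ℝ}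
    (hφ : ∀ t ∈ Icc 0 s, γ' t = toPt (cexp ((θ₀ + φ t) * I))) :
    toPt.symm (γ s) - toPt.symm (γ 0) = cexp (θ₀ * I) * headingChord φ s := by
  rw [← map_sub, ← h.integral_eq_sub, ← LinearIsometryEquiv.coe_toLinearIsometry,
    ← LinearIsometry.intervalIntegral_comp_comm, headingChord,
    ← intervalIntegral.integral_const_mul]
  refine intervalIntegral.integral_congr fun t ht => ?_
  rw [LinearIsometryEquiv.coe_toLinearIsometry, hφ t (by rwa [uIcc_of_le h.nonneg] at ht),
    toPt.symm_apply_apply, add_mul, Complex.exp_add]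

end BCPath

theorem fragment_has_csc_replacement_general (x X y Y : Pt)
    (γ γ' : ℝ → Pt) (s : ℝ)
    (h : BCPath γ γ' s) (he : EndCond γ γ' s x X y Y) (hfrag : s < 1) :
    ∃ (β β' : ℝ → Pt) (ℓ t₁ t₂ : ℝ),
      BCPath β β' ℓ ∧ EndCond β β' ℓ x X y Y ∧ IsCSC β β' ℓ t₁ t₂ ∧
      t₁ < Real.pi ∧ ℓ - t₂ < Real.pi := by
  obtain ⟨rfl, rfl, rfl, rfl⟩ := he
  have hπ := pi_gt_three
  obtain ⟨θ₀, φ, hφ0, hφlip, hφ⟩ := h.exists_lipschitz_lift hfrag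
  obtain ⟨a, d, hd, ha, hb, hchord⟩ :=
    exists_cscChord_eq_headingChord hφ0 hφlip h.nonneg (by linarith)
  obtain ⟨β, β', ℓ, t₁, t₂, hβ, hend, hcsc, ht₁, ht₂⟩ := exists_isCSC_endCond_cscChord
    (toPt.symm (γ 0)) θ₀ a d (φ s - a) (by linarith) hd (by linarith)
  refine ⟨β, β', ℓ, t₁, t₂, hβ, ?_, hcsc, ht₁, ht₂⟩
  have hdisp := h.sub_eq_mul_headingChord hφ
  rw [hchord, ← mul_assoc, ← Complex.exp_add, ← add_mul, sub_eq_iff_eq_add'] at hdisp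
  convert hend using 2
  · exact (toPt.apply_symm_apply _).symm
  · rw [hφ 0 ⟨le_rfl, h.nonneg⟩, hφ0, Complex.ofReal_zero, add_zero]
  · rw [← toPt.apply_symm_apply (γ s), hdisp]
  · rw [hφ s ⟨h.nonneg, le_rfl⟩]; push_cast; ring_nf

/-- For every fragment there is a csc path with the same endpoint condition whose circular
components each have length less than `π`. -/
theorem fragment_has_csc_replacement (x X y Y : Pt) (hX : ‖X‖ = 1) (hY : ‖Y‖ = 1)
    (γ γ' : ℝ → Pt) (s : ℝ)
    (h : BCPath γ γ' s) (he : EndCond γ γ' s x X y Y) (hfrag : s < 1) :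
    ∃ (β β' : ℝ → Pt) (ℓ t₁ t₂ : ℝ),
      BCPath β β' ℓ ∧ EndCond β β' ℓ x X y Y ∧ IsCSC β β' ℓ t₁ t₂ ∧
      t₁ < Real.pi ∧ ℓ - t₂ < Real.pi :=
  fragment_has_csc_replacement_general x X y Y γ γ' s h he hfrag
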